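/- Uniqueness of the quadratic invariant in odd dimension: for every m ≥ 1 put n = 2m+1, and let B' be any symmetric bilinear form on ℝⁿ such that B'(Ax, y) + B'(x, Ay) = 0 for all x, y ∈ ℝⁿ and all A ∈ {E₊, E₋, E₀}. Then B' = λ·B for some λ ∈ ℝ, where B is the symmetric bilinear form with B(eᵢ, e_{2m−i}) = ((−1)ⁱ/2)·C(2m,i) for i = 0, …, 2m and B(eᵢ, eⱼ) = 0 whenever i + j ≠ 2m. -/
import Mathlib


/-- `E₊` of the `n`-dimensional irreducible representation of `sl(2,ℝ)`:
`(E₊)_{i,i+1} = n−1−i`, other entries zero. -/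
noncomputable def EplusN (n : ℕ) : Matrix (Fin n) (Fin n) ℝ :=
  Matrix.of fun i j => if (i : ℕ) + 1 = (j : ℕ) then (n : ℝ) - 1 - (i : ℕ) else 0

/-- `E₋`: `(E₋)_{i+1,i} = i+1`, other entries zero. -/
noncomputable def EminusN (n : ℕ) : Matrix (Fin n) (Fin n) ℝ :=
  Matrix.of fun i j => if (i : ℕ) = (j : ℕ) + 1 then ((i : ℕ) : ℝ) else 0

/-- `E₀ = diag(2i − (n−1))`. -/
noncomputable def EzeroN (n : ℕ) : Matrix (Fin n) (Fin n) ℝ :=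
  Matrix.of fun i j => if i = j then 2 * ((i : ℕ) : ℝ) - ((n : ℝ) - 1) else 0

open Matrix

/-- The symmetric bilinear form `B` on `ℝ^{2m+1}` with
`B(eᵢ, e_{2m−i}) = ((−1)ⁱ/2)·C(2m,i)` and `B(eᵢ,eⱼ) = 0` for `i+j ≠ 2m`. -/
noncomputable def Bmat (m : ℕ) : Matrix (Fin (2 * m + 1)) (Fin (2 * m + 1)) ℝ :=
  Matrix.of fun i j =>
    if (i : ℕ) + (j : ℕ) = 2 * m
      then ((-1 : ℝ) ^ (i : ℕ) / 2) * (Nat.choose (2 * m) (i : ℕ) : ℝ)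
      else 0

/-- Uniqueness of the quadratic invariant in odd dimension `n = 2m+1`: any symmetric
bilinear form invariant under the irreducible `sl(2,ℝ)` is a multiple of `B`. -/
theorem stmt17 (m : ℕ) (hm : 1 ≤ m)
    (B' : (Fin (2 * m + 1) → ℝ) →ₗ[ℝ] (Fin (2 * m + 1) → ℝ) →ₗ[ℝ] ℝ)
    (hsymm : ∀ x y : Fin (2 * m + 1) → ℝ, B' x y = B' y x)
    (hinv : ∀ A ∈ ({EplusN (2 * m + 1), EminusN (2 * m + 1), EzeroN (2 * m + 1)} :
          Set (Matrix (Fin (2 * m + 1)) (Fin (2 * m + 1)) ℝ)),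
      ∀ x y : Fin (2 * m + 1) → ℝ, B' (A.mulVec x) y + B' x (A.mulVec y) = 0) :
    ∃ lam : ℝ, ∀ x y : Fin (2 * m + 1) → ℝ,
      B' x y = lam * (x ⬝ᵥ (Bmat m).mulVec y) := by
  classical
  -- basis vectors indexed by ℕ (to avoid Fin proof-term mismatches)
  set e : ℕ → (Fin (2*m+1) → ℝ) :=
    fun i => if h : i < 2*m+1 then Pi.single (⟨i, h⟩ : Fin (2*m+1)) 1 else 0 with he
  have h0 := hinv (EzeroN (2*m+1)) (by simp)
  have hminus := hinv (EminusN (2*m+1)) (by simp)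
  have he1 : ∀ (i : ℕ) (hi : i < 2*m+1) (k : Fin (2*m+1)),
      e i k = if (k : ℕ) = i then 1 else 0 := by
    intro i hi k
    simp only [he, dif_pos hi, Pi.single_apply]
    by_cases hk : (k : ℕ) = i
    · rw [if_pos (Fin.ext hk), if_pos hk]
    · rw [if_neg (fun hc => hk (by rw [hc])), if_neg hk]
  have hmv : ∀ (M : Matrix (Fin (2*m+1)) (Fin (2*m+1)) ℝ) (i : ℕ) (hi : i < 2*m+1)
      (k : Fin (2*m+1)), (M.mulVec (e i)) k = M k ⟨i, hi⟩ := by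
    intro M i hi k
    simp only [Matrix.mulVec, dotProduct, he1 i hi, mul_ite, mul_one, mul_zero]
    have hiff : ∀ j : Fin (2*m+1), ((j:ℕ) = i) = (j = ⟨i, hi⟩) := fun j => by
      rw [eq_iff_iff]; exact ⟨fun h => Fin.ext h, fun h => by rw [h]⟩
    simp only [hiff]
    rw [Finset.sum_ite_eq' Finset.univ (⟨i, hi⟩ : Fin (2*m+1)) (fun j => M k j)]
    simp
  -- E₀ action on basis vectors
  have hmv0 : ∀ (i : ℕ) (hi : i < 2*m+1),
      (EzeroN (2*m+1)).mulVec (e i) = (2*(i:ℝ) - 2*m) • e i := by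
    intro i hi
    funext k
    rw [hmv _ i hi, Pi.smul_apply, he1 i hi, smul_eq_mul]
    by_cases hk : (k : ℕ) = i
    · have hk' : k = (⟨i, hi⟩ : Fin (2*m+1)) := Fin.ext hk
      rw [if_pos hk]
      simp only [EzeroN, Matrix.of_apply, if_pos hk', hk]
      push_cast
      ring
    · have hk' : k ≠ (⟨i, hi⟩ : Fin (2*m+1)) := fun hc => hk (by rw [hc])
      rw [if_neg hk]
      simp [EzeroN, hk']
  -- E₋ action on basis vectors
  have hmvm : ∀ (i : ℕ), i < 2*m →
      (EminusN (2*m+1)).mulVec (e i) = ((i:ℝ) + 1) • e (i+1) := by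
    intro i hi
    funext k
    rw [hmv _ i (by omega), Pi.smul_apply, he1 (i+1) (by omega), smul_eq_mul]
    by_cases hk : (k : ℕ) = i + 1
    · rw [if_pos hk]
      simp only [EminusN, Matrix.of_apply]
      rw [if_pos (by simpa using hk), hk]
      push_cast
      ring
    · rw [if_neg hk]
      simp only [EminusN, Matrix.of_apply]
      rw [if_neg (by simpa using hk)]
      ring
  -- off-antidiagonal vanishing
  have hz : ∀ (i j : ℕ), i < 2*m+1 → j < 2*m+1 → i + j ≠ 2*m →
      (B' (e i)) (e j) = 0 := by
    intro i j hi hj hij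
    have hrec := h0 (e i) (e j)
    rw [hmv0 i hi, hmv0 j hj] at hrec
    simp only [_root_.map_smul, LinearMap.smul_apply, smul_eq_mul] at hrec
    have hne : (2*(i:ℝ) - 2*m) + (2*(j:ℝ) - 2*m) ≠ 0 := by
      intro hc
      apply hij
      have : ((i + j : ℕ) : ℝ) = ((2*m : ℕ) : ℝ) := by push_cast; linarith
      exact_mod_cast this
    have hfac : ((2*(i:ℝ) - 2*m) + (2*(j:ℝ) - 2*m)) * (B' (e i)) (e j) = 0 := by
      linear_combination hrec
    rcases mul_eq_zero.1 hfac with h | h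
    · exact absurd h hne
    · exact h
  -- recursion along the antidiagonal
  have key : ∀ (i : ℕ), i ≤ 2*m →
      (B' (e i)) (e (2*m - i))
        = (-1:ℝ)^i * (Nat.choose (2*m) i : ℝ) * (B' (e 0)) (e (2*m)) := by
    intro i
    induction i with
    | zero => intro _; simp
    | succ i ih =>
      intro hi
      have hi' : i < 2*m := by omega
      have hrec := hminus (e i) (e (2*m - i - 1))
      rw [hmvm i hi', hmvm (2*m - i - 1) (by omega)] at hrec
      have hidx : 2*m - i - 1 + 1 = 2*m - i := by omega
      rw [hidx] at hrec
      simp only [_root_.map_smul, LinearMap.smul_apply, smul_eq_mul] at hrec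
      rw [ih (by omega)] at hrec
      have hidx2 : 2*m - (i+1) = 2*m - i - 1 := by omega
      rw [hidx2]
      have hcast : ((2*m - i - 1 : ℕ) : ℝ) + 1 = 2*(m:ℝ) - i := by
        rw [Nat.cast_sub (by omega : 1 ≤ 2*m - i), Nat.cast_sub (by omega : i ≤ 2*m)]
        push_cast
        ring
      rw [hcast] at hrec
      have hchoose : ((i:ℝ) + 1) * (Nat.choose (2*m) (i+1) : ℝ)
          = (2*(m:ℝ) - i) * (Nat.choose (2*m) i : ℝ) := by
        have h := Nat.choose_succ_right_eq (2*m) i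
        have hc2 : ((Nat.choose (2*m) (i+1) * (i+1) : ℕ) : ℝ)
            = ((Nat.choose (2*m) i * (2*m - i) : ℕ) : ℝ) := by exact_mod_cast h
        push_cast [Nat.cast_sub (by omega : i ≤ 2*m)] at hc2
        linarith
      have hip : (i:ℝ) + 1 ≠ 0 := by positivity
      have hgoal2 : ((i:ℝ) + 1) * (B' (e (i+1))) (e (2*m - i - 1))
          = ((i:ℝ) + 1) * ((-1:ℝ)^(i+1) * (Nat.choose (2*m) (i+1) : ℝ)
              * (B' (e 0)) (e (2*m))) := by
        rw [pow_succ]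
        linear_combination hrec + (-1:ℝ)^i * (B' (e 0)) (e (2*m)) * hchoose
      exact mul_left_cancel₀ hip hgoal2
  -- relate e to Pi.single on Fin
  have hee : ∀ i : Fin (2*m+1), e (i : ℕ) = Pi.single i 1 := by
    intro i
    simp only [he, dif_pos i.isLt, Fin.eta]
  set lam : ℝ := 2 * (B' (e 0)) (e (2*m)) with hlam
  -- entrywise identity
  have hentry : ∀ i j : Fin (2*m+1),
      (B' (Pi.single i 1)) (Pi.single j 1) = lam * Bmat m i j := by
    intro i j
    rw [← hee i, ← hee j]
    by_cases hij : (i : ℕ) + (j : ℕ) = 2*m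
    · have hji : (j : ℕ) = 2*m - (i : ℕ) := by omega
      rw [hji, key (i : ℕ) (by omega)]
      simp only [Bmat, Matrix.of_apply, if_pos hij]
      rw [hlam]
      ring
    · rw [hz (i : ℕ) (j : ℕ) i.isLt j.isLt hij]
      simp only [Bmat, Matrix.of_apply, if_neg hij]
      ring
  refine ⟨lam, fun x y => ?_⟩
  have hx : x = ∑ i, x i • (Pi.single i 1 : Fin (2*m+1) → ℝ) := by
    funext k
    simp [Pi.single_apply, Finset.sum_apply]
  have hy : y = ∑ j, y j • (Pi.single j 1 : Fin (2*m+1) → ℝ) := by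
    funext k
    simp [Pi.single_apply, Finset.sum_apply]
  have hrhs : x ⬝ᵥ (Bmat m).mulVec y = ∑ i, ∑ j, x i * (Bmat m i j * y j) := by
    simp [dotProduct, Matrix.mulVec, Finset.mul_sum]
  have hBxy : (B' x) y
      = ∑ i, ∑ j, x i * (y j * (B' (Pi.single i 1)) (Pi.single j 1)) := by
    calc (B' x) y = ∑ i, x i * (B' (Pi.single i 1)) y := by
          conv_lhs => rw [hx]
          rw [map_sum, LinearMap.coe_sum, Finset.sum_apply]
          refine Finset.sum_congr rfl fun i _ => ?_
          rw [_root_.map_smul, LinearMap.smul_apply, smul_eq_mul]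
      _ = ∑ i, ∑ j, x i * (y j * (B' (Pi.single i 1)) (Pi.single j 1)) := by
          refine Finset.sum_congr rfl fun i _ => ?_
          conv_lhs => rw [hy]
          rw [map_sum, Finset.mul_sum]
          refine Finset.sum_congr rfl fun j _ => ?_
          rw [_root_.map_smul, smul_eq_mul]
  rw [hBxy, hrhs, Finset.mul_sum]
  refine Finset.sum_congr rfl fun i _ => ?_
  rw [Finset.mul_sum]
  refine Finset.sum_congr rfl fun j _ => ?_
  rw [hentry i j]
  ring
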